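/- Let φ : ℝ → ℝ be continuous with φ(x) = 0 for x ≤ 0, φ(x) = 1 for x ≥ 1, and φ continuously differentiable on [0,1], with ‖φ'‖_∞ := sup_{t∈[0,1]} |φ'(t)| > 0. Let r ≥ 1 be an integer and set a_j := φ(j/r) for 1 ≤ j ≤ r. Suppose S_r^{(a)}(x,y) ≥ 0 for all (x,y) ∈ [−1,1]². Then for every x ∈ [−1,1], M_r^{(a)}(x) ≥ 1/2 − 2‖φ'‖_∞ + r/(3‖φ'‖_∞). -/

import Mathlib

/-!
Writing `x = cos θ` and `c_j = 1 - φ(j/r)`, positivity of `S` at `y = 1` says that the cosine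
polynomial `K(s) = 1 + 2 ∑ c_j cos (j s)` is nonnegative. Averaging `K(s) K(s + t)` over the
`2r + 1` points `s = 2πi/(2r+1)` kills every cross term, so `1 + 2 ∑ c_j² cos (j t) ≥ 0` as well;
with `T_j(cos θ)² = (1 + cos (2jθ))/2` this gives `M(cos θ) ≥ 1/2 + ∑ c_j²`. Finally `φ` is
`‖φ'‖_∞`-Lipschitz with `φ 0 = 0`, so `c_j ≥ 1 - ‖φ'‖_∞ j / r`, and comparing the sum with an
integral gives `∑ c_j² ≥ r / (3‖φ'‖_∞) - 1`, while `‖φ'‖_∞ ≥ φ 1 - φ 0 = 1`.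
-/

open Polynomial

/-- The k-th Chebyshev polynomial of the first kind over ℝ. -/
noncomputable def chebT (k : ℕ) : Polynomial ℝ := Polynomial.Chebyshev.T ℝ (k : ℤ)

/-- The kernel `S_r^{(a)}(x,y) = 1 + 2∑_{j=1}^r (1-a_j) T_j(x) T_j(y)`. -/
noncomputable def Sker (r : ℕ) (a : ℕ → ℝ) (x y : ℝ) : ℝ :=
  1 + 2 * ∑ j ∈ Finset.Icc 1 r, (1 - a j) * (chebT j).eval x * (chebT j).eval y

/-- `M_r^{(a)}(x) = 1 + 2∑_{j=1}^r (1-a_j)² T_j(x)²`. -/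
noncomputable def Mfun (r : ℕ) (a : ℕ → ℝ) (x : ℝ) : ℝ :=
  1 + 2 * ∑ j ∈ Finset.Icc 1 r, (1 - a j) ^ 2 * (chebT j).eval x ^ 2

/-- The sup-norm of the derivative of `φ` on `[0,1]` (derivative taken within `[0,1]`). -/
noncomputable def phiDerivSup (φ : ℝ → ℝ) : ℝ :=
  ⨆ t : Set.Icc (0 : ℝ) 1, |derivWithin φ (Set.Icc 0 1) t|

open Real Finset

theorem sum_range_cos_mul_two_pi_div_add {N : ℕ} {m : ℤ} (hm : ¬ (N : ℤ) ∣ m) (c : ℝ) :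
    ∑ i ∈ range N, cos (m * (2 * π * i / N) + c) = 0 := by
  obtain rfl | hN := eq_or_ne N 0
  · simp
  set ζ : ℂ := Complex.exp (2 * π * Complex.I / N) with hζ_def
  have hζ : IsPrimitiveRoot ζ N := Complex.isPrimitiveRoot_exp N hN
  have hω : ζ ^ m ≠ 1 := mt (hζ.zpow_eq_one_iff_dvd m).1 hm
  have hωN : (ζ ^ m) ^ N = 1 := by
    rw [← zpow_natCast, ← zpow_mul, mul_comm m, zpow_mul, zpow_natCast, hζ.pow_eq_one, one_zpow]
  have hterm (i : ℕ) :
      cos (m * (2 * π * i / N) + c) = (Complex.exp (c * Complex.I) * (ζ ^ m) ^ i).re := by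
    rw [hζ_def, ← Complex.exp_int_mul, ← Complex.exp_nat_mul, ← Complex.exp_add,
      ← Complex.exp_ofReal_mul_I_re]
    congr 2
    push_cast
    ring
  simp_rw [hterm, ← Complex.re_sum, ← mul_sum, geom_sum_eq hω, hωN]
  simp

theorem sum_range_cos_node_add {r : ℕ} {m : ℤ} (hm0 : m ≠ 0) (hm : |m| ≤ 2 * r) (c : ℝ) :
    ∑ i ∈ range (2 * r + 1), cos (m * (2 * π * i / (2 * r + 1 : ℕ)) + c) = 0 :=
  sum_range_cos_mul_two_pi_div_add
    (fun h => hm0 (Int.eq_zero_of_abs_lt_dvd h (by push_cast; omega))) c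

theorem sum_range_cos_node_mul_cos {r j k : ℕ} (hj : j ∈ Icc 1 r) (hk : k ∈ Icc 1 r) (t : ℝ) :
    ∑ i ∈ range (2 * r + 1), cos (j * (2 * π * i / (2 * r + 1 : ℕ))) *
        cos (k * (2 * π * i / (2 * r + 1 : ℕ) + t)) =
      if j = k then (2 * r + 1 : ℕ) * cos (j * t) / 2 else 0 := by
  rw [mem_Icc] at hj hk
  have hprod (x : ℝ) : cos (j * x) * cos (k * (x + t)) =
      (cos (((j - k : ℤ) : ℝ) * x + -(k * t)) + cos (((j + k : ℤ) : ℝ) * x + k * t)) / 2 := by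
    push_cast
    rw [show ((j : ℝ) - k) * x + -(k * t) = j * x - k * (x + t) by ring,
      show ((j : ℝ) + k) * x + k * t = j * x + k * (x + t) by ring, cos_sub, cos_add]
    ring
  simp_rw [hprod, ← sum_div, sum_add_distrib,
    sum_range_cos_node_add (r := r) (m := j + k) (by omega) (by rw [abs_le]; omega)]
  split_ifs with hjk
  · subst hjk
    simp
  · rw [sum_range_cos_node_add (r := r) (m := j - k) (by omega) (by rw [abs_le]; omega)]
    simp

noncomputable def cosKernel (r : ℕ) (c : ℕ → ℝ) (s : ℝ) : ℝ :=
  1 + 2 * ∑ j ∈ Icc 1 r, c j * cos (j * s)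

theorem sum_range_cosKernel_node_mul (r : ℕ) (c : ℕ → ℝ) (t : ℝ) :
    ∑ i ∈ range (2 * r + 1), cosKernel r c (2 * π * i / (2 * r + 1 : ℕ)) *
        cosKernel r c (2 * π * i / (2 * r + 1 : ℕ) + t) =
      (2 * r + 1 : ℕ) * cosKernel r (fun j => c j ^ 2) t := by
  set s : ℕ → ℝ := fun i => 2 * π * i / (2 * r + 1 : ℕ)
  show ∑ i ∈ range (2 * r + 1), cosKernel r c (s i) * cosKernel r c (s i + t) = _
  have hlin (t' : ℝ) : ∑ i ∈ range (2 * r + 1), ∑ j ∈ Icc 1 r, c j * cos (j * (s i + t')) = 0 := by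
    rw [sum_comm]
    refine sum_eq_zero fun j hj => ?_
    rw [mem_Icc] at hj
    rw [← mul_sum]
    have := sum_range_cos_node_add (r := r) (m := j) (by omega) (by rw [abs_le]; omega) (j * t')
    simp only [Int.cast_natCast] at this
    simp only [s, mul_add, this, mul_zero]
  have hquad : ∑ i ∈ range (2 * r + 1), (∑ j ∈ Icc 1 r, c j * cos (j * s i)) *
      ∑ k ∈ Icc 1 r, c k * cos (k * (s i + t)) =
      (2 * r + 1 : ℕ) / 2 * ∑ j ∈ Icc 1 r, c j ^ 2 * cos (j * t) := by
    simp_rw [sum_mul_sum, mul_mul_mul_comm]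
    rw [sum_comm, mul_sum]
    refine sum_congr rfl fun j hj => ?_
    rw [sum_comm]
    simp_rw [← mul_sum]
    rw [sum_congr rfl fun k hk => by rw [sum_range_cos_node_mul_cos hj hk t]]
    simp_rw [mul_ite, mul_zero, sum_ite_eq, if_pos hj]
    ring
  have hlin0 : ∑ i ∈ range (2 * r + 1), ∑ j ∈ Icc 1 r, c j * cos (j * s i) = 0 := by
    simpa using hlin 0
  have hexpand (i : ℕ) : cosKernel r c (s i) * cosKernel r c (s i + t) =
      1 + 2 * ∑ j ∈ Icc 1 r, c j * cos (j * s i) + 2 * ∑ k ∈ Icc 1 r, c k * cos (k * (s i + t)) +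
        4 * ((∑ j ∈ Icc 1 r, c j * cos (j * s i)) * ∑ k ∈ Icc 1 r, c k * cos (k * (s i + t))) := by
    simp only [cosKernel]
    ring
  rw [sum_congr rfl fun i _ => hexpand i]
  simp only [sum_add_distrib, ← mul_sum, hlin0, hlin, hquad, sum_const, card_range, nsmul_eq_mul,
    cosKernel]
  ring

theorem cosKernel_sq_nonneg {r : ℕ} {c : ℕ → ℝ} (hK : ∀ s, 0 ≤ cosKernel r c s) (t : ℝ) :
    0 ≤ cosKernel r (fun j => c j ^ 2) t := by
  have h := sum_nonneg fun i (_ : i ∈ range (2 * r + 1)) =>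
    mul_nonneg (hK (2 * π * i / (2 * r + 1 : ℕ))) (hK (2 * π * i / (2 * r + 1 : ℕ) + t))
  rw [sum_range_cosKernel_node_mul] at h
  exact (mul_nonneg_iff_of_pos_left (by positivity)).1 h

theorem sum_Icc_one_eq_sum_range_succ {M : Type*} [AddCommMonoid M] (f : ℕ → M) (r : ℕ) :
    ∑ j ∈ Icc 1 r, f j = ∑ i ∈ range r, f (i + 1) := by
  rw [← Ico_add_one_right_eq_Icc, sum_Ico_eq_sum_range]
  simp [add_comm]

theorem integral_one_sub_div_sq {b : ℝ} (hb : b ≠ 0) : ∫ u in 0..b, (1 - u / b) ^ 2 = b / 3 := by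
  rw [intervalIntegral.integral_comp_div (fun u => (1 - u) ^ 2) hb]
  simp [hb, intervalIntegral.integral_comp_sub_left (fun u => u ^ 2)]
  ring

theorem div_three_sub_one_le_sum_sq {r : ℕ} {b : ℝ} (hb : 0 < b) (hbr : b ≤ r + 1) {c : ℕ → ℝ}
    (hc : ∀ j ∈ Icc 1 r, 1 - j / b ≤ c j) : b / 3 - 1 ≤ ∑ j ∈ Icc 1 r, c j ^ 2 := by
  set g : ℝ → ℝ := fun u => max 0 (1 - u / b) ^ 2
  have hg_anti : Antitone g := fun u v huv =>
    pow_le_pow_left₀ (le_max_left _ _) (max_le_max le_rfl (by gcongr)) 2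
  have hg_cont : Continuous g := by fun_prop
  have hg_le (j : ℕ) (hj : j ∈ Icc 1 r) : g j ≤ c j ^ 2 := by
    rw [← sq_abs (c j)]
    exact pow_le_pow_left₀ (le_max_left _ _)
      (max_le (abs_nonneg _) ((hc j hj).trans (le_abs_self _))) 2
  have hg_eq : Set.EqOn g (fun u => (1 - u / b) ^ 2) (Set.uIcc 0 b) := fun u hu => by
    rw [Set.uIcc_of_le hb.le] at hu
    simp only [g, max_eq_right (sub_nonneg.2 ((div_le_one hb).2 hu.2))]
  calc b / 3 - 1 = (∫ u in 0..b, g u) - 1 := by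
        rw [intervalIntegral.integral_congr hg_eq, integral_one_sub_div_sq hb.ne']
    _ ≤ (∫ u in 0..0 + (r + 1 : ℕ), g u) - 1 := by
        gcongr
        refine intervalIntegral.integral_mono_interval le_rfl hb.le (by push_cast; linarith)
          (.of_forall fun u => sq_nonneg _) (hg_cont.intervalIntegrable _ _)
    _ ≤ ∑ i ∈ range (r + 1), g (0 + i) - 1 := by
        gcongr
        exact (hg_anti.antitoneOn _).integral_le_sum
    _ = ∑ j ∈ Icc 1 r, g j := by
        simp [sum_range_succ', sum_Icc_one_eq_sum_range_succ, g]
    _ ≤ ∑ j ∈ Icc 1 r, c j ^ 2 := sum_le_sum hg_le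

theorem chebT_eval_cos (j : ℕ) (θ : ℝ) : (chebT j).eval (cos θ) = cos (j * θ) := by
  simp [chebT]

theorem Sker_cos_one (r : ℕ) (a : ℕ → ℝ) (s : ℝ) :
    Sker r a (cos s) 1 = cosKernel r (fun j => 1 - a j) s := by
  simp [Sker, cosKernel, chebT, Polynomial.Chebyshev.T_eval_one]

theorem Mfun_cos (r : ℕ) (a : ℕ → ℝ) (θ : ℝ) :
    Mfun r a (cos θ) =
      1 / 2 + ∑ j ∈ Icc 1 r, (1 - a j) ^ 2 + cosKernel r (fun j => (1 - a j) ^ 2) (2 * θ) / 2 := by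
  have hterm (j : ℕ) : (1 - a j) ^ 2 * (chebT j).eval (cos θ) ^ 2 =
      (1 - a j) ^ 2 / 2 + (1 - a j) ^ 2 * cos (j * (2 * θ)) / 2 := by
    rw [chebT_eval_cos, cos_sq, mul_left_comm]
    ring
  simp only [Mfun, cosKernel, hterm, sum_add_distrib, ← sum_div]
  ring

theorem abs_sub_le_phiDerivSup_mul {φ : ℝ → ℝ} (hφ : ContDiffOn ℝ 1 φ (Set.Icc 0 1)) {x y : ℝ}
    (hx : x ∈ Set.Icc (0 : ℝ) 1) (hy : y ∈ Set.Icc (0 : ℝ) 1) :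
    |φ y - φ x| ≤ phiDerivSup φ * |y - x| := by
  have hcont : ContinuousOn (fun t => |derivWithin φ (Set.Icc 0 1) t|) (Set.Icc 0 1) :=
    (hφ.continuousOn_derivWithin (uniqueDiffOn_Icc one_pos) le_rfl).abs
  have hbdd : BddAbove (Set.range fun t : Set.Icc (0 : ℝ) 1 => |derivWithin φ (Set.Icc 0 1) t|) := by
    simpa only [Set.image_eq_range] using (isCompact_Icc.image_of_continuousOn hcont).bddAbove
  simpa only [Real.norm_eq_abs, phiDerivSup] using
    (convex_Icc 0 1).norm_image_sub_le_of_norm_derivWithin_le (hφ.differentiableOn one_ne_zero)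
      (fun t ht => le_ciSup hbdd (⟨t, ht⟩ : Set.Icc (0 : ℝ) 1)) hx hy

theorem Mfun_lower_bound_phi_general (φ : ℝ → ℝ)
    (h0 : ∀ x : ℝ, x ≤ 0 → φ x = 0) (h1 : ∀ x : ℝ, 1 ≤ x → φ x = 1)
    (hC1 : ContDiffOn ℝ 1 φ (Set.Icc 0 1))
    (r : ℕ) (hr : 1 ≤ r)
    (hS : ∀ x ∈ Set.Icc (-1 : ℝ) 1, ∀ y ∈ Set.Icc (-1 : ℝ) 1,
      0 ≤ Sker r (fun j => φ ((j : ℝ) / r)) x y) :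
    ∀ x ∈ Set.Icc (-1 : ℝ) 1,
      1 / 2 - 2 * phiDerivSup φ + (r : ℝ) / (3 * phiDerivSup φ) ≤
        Mfun r (fun j => φ ((j : ℝ) / r)) x := by
  set L := phiDerivSup φ
  have hzero : (0 : ℝ) ∈ Set.Icc (0 : ℝ) 1 := ⟨le_rfl, zero_le_one⟩
  have hL : 1 ≤ L := by
    simpa [h0, h1] using abs_sub_le_phiDerivSup_mul hC1 hzero (Set.right_mem_Icc.2 zero_le_one)
  have hr0 : (0 : ℝ) < r := by exact_mod_cast hr
  have hc (j : ℕ) (hj : j ∈ Icc 1 r) : 1 - j / (r / L) ≤ 1 - φ (j / r) := by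
    have hjr : (j : ℝ) / r ∈ Set.Icc (0 : ℝ) 1 :=
      ⟨by positivity, (div_le_one hr0).2 (by exact_mod_cast (mem_Icc.1 hj).2)⟩
    have hLip := abs_sub_le_phiDerivSup_mul hC1 hzero hjr
    rw [h0 0 le_rfl, sub_zero, sub_zero, abs_of_nonneg hjr.1] at hLip
    rw [div_div_eq_mul_div, mul_div_right_comm, mul_comm]
    linarith [le_abs_self (φ (j / r))]
  have hK (s : ℝ) : 0 ≤ cosKernel r (fun j => 1 - φ (j / r)) s := by
    rw [← Sker_cos_one]
    exact hS _ ⟨neg_one_le_cos s, cos_le_one s⟩ 1 (Set.right_mem_Icc.2 (by norm_num))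
  intro x hx
  obtain ⟨θ, rfl⟩ : ∃ θ, cos θ = x := ⟨arccos x, cos_arccos hx.1 hx.2⟩
  have hsq := div_three_sub_one_le_sum_sq (by positivity)
    ((div_le_self hr0.le hL).trans (le_add_of_nonneg_right zero_le_one)) hc
  have hK2 := cosKernel_sq_nonneg hK (2 * θ)
  rw [div_div, mul_comm] at hsq
  rw [Mfun_cos]
  linarith

/-- lower bound on `M_r^{(a)}` in terms of `‖φ'‖_∞` for `a_j = φ(j/r)`. -/
theorem Mfun_lower_bound_phi (φ : ℝ → ℝ) (hcont : Continuous φ)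
    (h0 : ∀ x : ℝ, x ≤ 0 → φ x = 0) (h1 : ∀ x : ℝ, 1 ≤ x → φ x = 1)
    (hC1 : ContDiffOn ℝ 1 φ (Set.Icc 0 1)) (hpos : 0 < phiDerivSup φ)
    (r : ℕ) (hr : 1 ≤ r)
    (hS : ∀ x ∈ Set.Icc (-1 : ℝ) 1, ∀ y ∈ Set.Icc (-1 : ℝ) 1,
      0 ≤ Sker r (fun j => φ ((j : ℝ) / r)) x y) :
    ∀ x ∈ Set.Icc (-1 : ℝ) 1,
      1 / 2 - 2 * phiDerivSup φ + (r : ℝ) / (3 * phiDerivSup φ) ≤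
        Mfun r (fun j => φ ((j : ℝ) / r)) x :=
  Mfun_lower_bound_phi_general φ h0 h1 hC1 r hr hS
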